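/- With A(f) = {x : ∃ L, ∀ n, f^{n+L}(x) ∉ T(f^n(B(0,R)))} for a continuous open map f satisfying the covering property (1a), the set A(f) is completely invariant: x ∈ A(f) if and only if f(x) ∈ A(f). -/

import Mathlib

/-!
By the covering property there is `N ≥ 1` with `B ⊆ T(f^N(B))`, where `B = B(0, R)`. The key
fact is a maximum principle: a continuous open map sends `T(E)` into `T(f(E))` for open `E`.
Indeed, a bounded complementary component of `E` is enclosed by a bounded open set `W` with
`∂W ⊆ E` (Šura-Bura), and `f(W) ⊆ T(f(∂W))` because `∂f(W) ⊆ f(∂W)`. Applying `f^n` to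
`B ⊆ T(f^N(B))` gives `T(f^n(B)) ⊆ T(f^{n+N}(B))`, so an escape index `L` of `x` yields the
escape index `L + N - 1` of `f(x)`. The converse is immediate.
-/

open Set Metric Filter Bornology Topology

noncomputable section

/-- The topological hull `T(E)`: the union of `E` with all bounded connected
components of its complement. -/
def topHull {m : ℕ} (E : Set (EuclideanSpace ℝ (Fin m))) : Set (EuclideanSpace ℝ (Fin m)) :=
  E ∪ {x | IsBounded (connectedComponentIn Eᶜ x)}

/-- The covering property (1a): for each `R > R₀` there exist `r_n → ∞` with
`B(0, r_n) ⊆ T(f^n(B(0,R)))`. -/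
def CoveringProperty {m : ℕ} (f : EuclideanSpace ℝ (Fin m) → EuclideanSpace ℝ (Fin m))
    (R₀ : ℝ) : Prop :=
  ∀ R > R₀, ∃ r : ℕ → ℝ, Tendsto r atTop atTop ∧
    ∀ n : ℕ, ball (0 : EuclideanSpace ℝ (Fin m)) (r n) ⊆ topHull (f^[n] '' ball 0 R)

/-- The fast escaping set defined via radius `R`:
`A(f) = {x : ∃ L, ∀ n, f^{n+L}(x) ∉ T(f^n(B(0,R)))}`. -/
def fastEscaping {m : ℕ} (f : EuclideanSpace ℝ (Fin m) → EuclideanSpace ℝ (Fin m))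
    (R : ℝ) : Set (EuclideanSpace ℝ (Fin m)) :=
  {x | ∃ L : ℕ, ∀ n : ℕ, f^[n + L] x ∉ topHull (f^[n] '' ball (0 : EuclideanSpace ℝ (Fin m)) R)}

section Topology

variable {α β : Type*} [TopologicalSpace α] [TopologicalSpace β]

theorem IsOpenMap.iterate {f : α → α} (hf : IsOpenMap f) (n : ℕ) : IsOpenMap f^[n] := by
  induction n with
  | zero => exact IsOpenMap.id
  | succ n ih => rw [Function.iterate_succ']; exact hf.comp ih

theorem IsOpenMap.frontier_image_subset [T2Space β] {f : α → β} (hf : Continuous f)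
    (hopen : IsOpenMap f) {W : Set α} (hW : IsOpen W) (hWc : IsCompact (closure W)) :
    frontier (f '' W) ⊆ f '' frontier W := by
  intro y hy
  rw [(hopen W hW).frontier_eq] at hy
  have hcl : closure (f '' W) ⊆ f '' closure W :=
    closure_minimal (image_mono subset_closure) (hWc.image hf).isClosed
  obtain ⟨x, hx, rfl⟩ := hcl hy.1
  exact ⟨x, ⟨hx, fun hxW => hy.2 ⟨x, interior_subset hxW, rfl⟩⟩, rfl⟩

/-- Šura-Bura lemma. -/
theorem exists_isClopen_connectedComponent_subset [T2Space α] [CompactSpace α] {x : α}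
    {O : Set α} (hO : IsOpen O) (h : connectedComponent x ⊆ O) :
    ∃ Q : Set α, IsClopen Q ∧ connectedComponent x ⊆ Q ∧ Q ⊆ O := by
  set π : α → ConnectedComponents α := ConnectedComponents.mk
  have hπx : π x ∉ π '' Oᶜ := by
    rintro ⟨z, hzO, hz⟩
    exact hzO (h (ConnectedComponents.coe_eq_coe'.mp hz))
  have hclosed : IsClosed (π '' Oᶜ) :=
    (hO.isClosed_compl.isCompact.image ConnectedComponents.continuous_coe).isClosed
  -- the space of components of a compact Hausdorff space is profinite
  obtain ⟨V, hV, hxV, hVO⟩ :=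
    compact_exists_isClopen_in_isOpen hclosed.isOpen_compl hπx
  refine ⟨π ⁻¹' V, hV.preimage ConnectedComponents.continuous_coe, ?_, ?_⟩
  · rw [← connectedComponents_preimage_singleton]
    exact preimage_mono (singleton_subset_iff.mpr hxV)
  · intro z hzV
    by_contra hzO
    exact hVO hzV ⟨z, hzO, rfl⟩

theorem IsCompact.exists_connectedComponentIn_subset [T2Space α] {K O : Set α}
    (hK : IsCompact K) (hO : IsOpen O) {x : α} (hx : x ∈ K)
    (h : connectedComponentIn K x ⊆ O) :
    ∃ Q : Set α, IsCompact Q ∧ IsClosed (K \ Q) ∧ connectedComponentIn K x ⊆ Q ∧ Q ⊆ O := by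
  have : CompactSpace K := isCompact_iff_compactSpace.mp hK
  have hcomp : connectedComponentIn K x = (↑) '' connectedComponent (⟨x, hx⟩ : K) :=
    connectedComponentIn_eq_image hx
  obtain ⟨Q, hQ, hxQ, hQO⟩ := exists_isClopen_connectedComponent_subset
    (hO.preimage continuous_subtype_val) (image_subset_iff.mp (hcomp ▸ h))
  have hdiff : K \ (↑) '' Q = (↑) '' Qᶜ := by
    rw [← Set.range_sdiff_image Subtype.val_injective, Subtype.range_coe]
  refine ⟨(↑) '' Q, hQ.isClosed.isCompact.image continuous_subtype_val, ?_,
    hcomp ▸ image_mono hxQ, image_subset_iff.mpr hQO⟩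
  rw [hdiff]
  exact (hQ.compl.isClosed.isCompact.image continuous_subtype_val).isClosed

end Topology

theorem exists_isOpen_isBounded_frontier_subset_compl {α : Type*} [MetricSpace α]
    [ProperSpace α] {F : Set α} (hF : IsClosed F) {x : α} (hx : x ∈ F)
    (hb : IsBounded (connectedComponentIn F x)) :
    ∃ W : Set α, IsOpen W ∧ IsBounded W ∧ x ∈ W ∧ frontier W ⊆ Fᶜ := by
  obtain ⟨ρ, -, hρ⟩ := hb.subset_ball_lt 0 x
  set Z := F ∩ closedBall x ρ
  have hZ : IsCompact Z := (isCompact_closedBall x ρ).inter_left hF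
  have hxZ : x ∈ Z := ⟨hx, ball_subset_closedBall (hρ (mem_connectedComponentIn hx))⟩
  obtain ⟨Q, hQ, hZQ, hxQ, hQρ⟩ := hZ.exists_connectedComponentIn_subset isOpen_ball hxZ
    ((connectedComponentIn_mono x inter_subset_left).trans hρ)
  obtain ⟨W, hW, hQW, hWU, hWc⟩ := exists_open_between_and_isCompact_closure hQ
    (isOpen_ball.inter hZQ.isOpen_compl) (subset_inter hQρ fun p hpQ hpZQ => hpZQ.2 hpQ)
  refine ⟨W, hW, hWc.isBounded.subset subset_closure,
    hQW (hxQ (mem_connectedComponentIn hxZ)), fun p hp hpF => ?_⟩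
  have ⟨hpρ, hpZQ⟩ := hWU (frontier_subset_closure hp)
  have hpQ : p ∈ Q := by_contra fun hpQ => hpZQ ⟨⟨hpF, ball_subset_closedBall hpρ⟩, hpQ⟩
  exact (hW.frontier_eq ▸ hp).2 (hQW hpQ)

variable {m : ℕ}

theorem topHull_mono {E F : Set (EuclideanSpace ℝ (Fin m))} (h : E ⊆ F) :
    topHull E ⊆ topHull F := by
  rintro z (hz | hz)
  · exact Or.inl (h hz)
  · by_cases hzF : z ∈ F
    · exact Or.inl hzF
    · exact Or.inr ((show IsBounded (connectedComponentIn Eᶜ z) from hz).subset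
        (connectedComponentIn_mono z (compl_subset_compl.mpr h)))

theorem topHull_subset_of_subset_topHull {S G : Set (EuclideanSpace ℝ (Fin m))}
    (h : S ⊆ topHull G) : topHull S ⊆ topHull G := by
  rintro z (hz | hz)
  · exact h hz
  by_contra hzG
  have hunb : ¬ IsBounded (connectedComponentIn Gᶜ z) := fun hb => hzG (Or.inr hb)
  have hCS : connectedComponentIn Gᶜ z ⊆ Sᶜ := by
    intro c hc hcS
    rcases h hcS with hcG | hcb
    · exact connectedComponentIn_subset Gᶜ z hc hcG
    · exact hunb (connectedComponentIn_eq hc ▸ hcb)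
  exact hunb ((show IsBounded (connectedComponentIn Sᶜ z) from hz).subset
    (isPreconnected_connectedComponentIn.subset_connectedComponentIn
      (mem_connectedComponentIn fun hzG' => hzG (Or.inl hzG')) hCS))

section Dynamics

variable {f : EuclideanSpace ℝ (Fin m) → EuclideanSpace ℝ (Fin m)}

theorem image_subset_topHull_image_frontier (hf : Continuous f) (hopen : IsOpenMap f)
    {W : Set (EuclideanSpace ℝ (Fin m))} (hW : IsOpen W) (hWb : IsBounded W) :
    f '' W ⊆ topHull (f '' frontier W) := by
  rintro _ ⟨w, hw, rfl⟩
  by_cases hy : f w ∈ f '' frontier W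
  · exact Or.inl hy
  have hWc : IsCompact (closure W) := hWb.isCompact_closure
  -- the component cannot leave `f '' W`, whose frontier lies in `f '' frontier W`
  have hsub : connectedComponentIn (f '' frontier W)ᶜ (f w) ⊆ f '' W := by
    refine isPreconnected_connectedComponentIn.subset_of_closure_inter_subset (hopen W hW)
      ⟨f w, mem_connectedComponentIn hy, w, hw, rfl⟩ fun z ⟨hzcl, hzC⟩ => ?_
    by_contra hzW
    exact connectedComponentIn_subset _ _ hzC
      (hopen.frontier_image_subset hf hW hWc ⟨hzcl, (hopen W hW).interior_eq.symm ▸ hzW⟩)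
  exact Or.inr (((hWc.image hf).isBounded.subset (image_mono subset_closure)).subset hsub)

theorem image_topHull_subset (hf : Continuous f) (hopen : IsOpenMap f)
    {E : Set (EuclideanSpace ℝ (Fin m))} (hE : IsOpen E) :
    f '' topHull E ⊆ topHull (f '' E) := by
  rintro _ ⟨x, hx | hx, rfl⟩
  · exact Or.inl (mem_image_of_mem f hx)
  by_cases hxE : x ∈ E
  · exact Or.inl (mem_image_of_mem f hxE)
  obtain ⟨W, hW, hWb, hxW, hWE⟩ :=
    exists_isOpen_isBounded_frontier_subset_compl hE.isClosed_compl hxE hx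
  rw [compl_compl] at hWE
  exact topHull_mono (image_mono hWE)
    (image_subset_topHull_image_frontier hf hopen hW hWb (mem_image_of_mem f hxW))

theorem topHull_iterate_image_subset_add (hf : Continuous f) (hopen : IsOpenMap f)
    {E : Set (EuclideanSpace ℝ (Fin m))} (hE : IsOpen E) {N : ℕ}
    (hEN : E ⊆ topHull (f^[N] '' E)) (n : ℕ) :
    topHull (f^[n] '' E) ⊆ topHull (f^[n + N] '' E) := by
  refine topHull_subset_of_subset_topHull ?_
  calc f^[n] '' E ⊆ f^[n] '' topHull (f^[N] '' E) := image_mono hEN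
    _ ⊆ topHull (f^[n] '' (f^[N] '' E)) :=
      image_topHull_subset (hf.iterate n) (hopen.iterate n) (hopen.iterate N E hE)
    _ = topHull (f^[n + N] '' E) := by rw [← image_comp, ← Function.iterate_add]

theorem apply_mem_fastEscaping (hf : Continuous f) (hopen : IsOpenMap f) {R : ℝ} {N : ℕ}
    (hB : ball 0 R ⊆ topHull (f^[N + 1] '' ball 0 R)) {x : EuclideanSpace ℝ (Fin m)}
    (hx : x ∈ fastEscaping f R) : f x ∈ fastEscaping f R := by
  obtain ⟨L, hL⟩ := hx
  refine ⟨L + N, fun n hn => hL (n + (N + 1)) ?_⟩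
  rw [show n + (N + 1) + L = n + (L + N) + 1 by omega, Function.iterate_succ_apply]
  exact topHull_iterate_image_subset_add hf hopen isOpen_ball hB n hn

theorem mem_fastEscaping_of_apply_mem {R : ℝ} {x : EuclideanSpace ℝ (Fin m)}
    (hx : f x ∈ fastEscaping f R) : x ∈ fastEscaping f R := by
  obtain ⟨L, hL⟩ := hx
  exact ⟨L + 1, fun n => by rw [← add_assoc, Function.iterate_succ_apply]; exact hL n⟩

end Dynamics

theorem fastEscaping_completely_invariant {m : ℕ}
    (f : EuclideanSpace ℝ (Fin m) → EuclideanSpace ℝ (Fin m))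
    (hf : Continuous f) (hopen : IsOpenMap f)
    (R₀ : ℝ) (hcov : CoveringProperty f R₀)
    (R : ℝ) (hR : R₀ < R) (x : EuclideanSpace ℝ (Fin m)) :
    x ∈ fastEscaping f R ↔ f x ∈ fastEscaping f R := by
  obtain ⟨r, hr, hball⟩ := hcov R hR
  obtain ⟨N, hN⟩ := ((tendsto_add_atTop_iff_nat 1).mpr hr |>.eventually_gt_atTop R).exists
  have hB : ball 0 R ⊆ topHull (f^[N + 1] '' ball 0 R) :=
    (ball_subset_ball hN.le).trans (hball (N + 1))
  exact ⟨apply_mem_fastEscaping hf hopen hB, mem_fastEscaping_of_apply_mem⟩
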